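/- Let q be a positive integer, n₁ a divisor-related parameter with (n₁, q) conditions as below, and consider the character sum C = Σ_{d|q} d μ(q/d) Σ*_{α mod qr/n₁, n₁α ≡ -m mod d} e(± \bar{α} n₂ / (qr/n₁)). Then the full sum over a mod q with (a,q)=1 of S(r\bar{a}, ±n₂; qr/n₁) e(\bar{a}m/q) equals C. -/

import Mathlib

open Finset

/-- `e(x) = e^{2πix}`. -/
noncomputable def eC (x : ℝ) : ℂ := Complex.exp (2 * Real.pi * Complex.I * x)

/-- The Kloosterman sum `S(a,b;c) = Σ*_{x mod c} e((ax + b x̄)/c)`. -/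
noncomputable def kloosterman (a b : ℤ) (c : ℕ) [NeZero c] : ℂ :=
  ∑ x : (ZMod c)ˣ,
    eC (((a * (((x : ZMod c)).val : ℤ) + b * (((x⁻¹ : (ZMod c)ˣ) : ZMod c).val : ℤ) : ℤ) : ℝ) / c)

lemma eC_add (x y : ℝ) : eC (x + y) = eC x * eC y := by
  simp [eC, mul_add, Complex.exp_add]

lemma eC_int (k : ℤ) : eC k = 1 := by
  rw [eC, mul_comm]
  exact_mod_cast Complex.exp_int_mul_two_pi_mul_I k

lemma eC_nat_mul (k : ℕ) (x : ℝ) : eC (k * x) = eC x ^ k := by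
  rw [eC, eC, ← Complex.exp_nat_mul]
  push_cast
  ring_nf

lemma full_sum (n : ℕ) (hn : 0 < n) (L : ℤ) :
    ∑ i ∈ range n, eC (((i : ℤ) * L : ℤ) / (n : ℝ)) = if (n : ℤ) ∣ L then (n : ℂ) else 0 := by
  by_cases h : (n : ℤ) ∣ L
  · rw [if_pos h]
    obtain ⟨c, rfl⟩ := h
    have : ∀ i ∈ range n, eC (((i : ℤ) * ((n : ℤ) * c) : ℤ) / (n : ℝ)) = 1 := by
      intro i _
      have : (((i : ℤ) * ((n : ℤ) * c) : ℤ) : ℝ) / (n : ℝ) = (((i : ℤ) * c : ℤ) : ℝ) := by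
        have hn' : (n : ℝ) ≠ 0 := by positivity
        push_cast
        field_simp
      rw [this, eC_int]
    rw [Finset.sum_congr rfl this]
    simp
  · rw [if_neg h]
    have hz : ∀ i ∈ range n, eC (((i : ℤ) * L : ℤ) / (n : ℝ)) = eC ((L : ℝ) / n) ^ i := by
      intro i _
      rw [← eC_nat_mul]
      congr 1
      push_cast
      ring
    rw [Finset.sum_congr rfl hz]
    have hne : eC ((L : ℝ) / n) ≠ 1 := by
      intro hc
      rw [eC, Complex.exp_eq_one_iff] at hc
      obtain ⟨k, hk⟩ := hc
      apply h
      have hpi : (2 * (Real.pi : ℂ) * Complex.I) ≠ 0 := by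
        simp [Real.pi_ne_zero, Complex.I_ne_zero]
      have : ((L : ℝ) / n : ℂ) = (k : ℂ) := by
        have hk' : ((L : ℝ) / n : ℂ) * (2 * (Real.pi:ℂ) * Complex.I) = (k:ℂ) * (2 * (Real.pi:ℂ) * Complex.I) := by
          rw [← hk]; push_cast; ring
        exact mul_right_cancel₀ hpi hk'
      have h2 : (L : ℝ) / n = (k : ℝ) := by exact_mod_cast this
      have hn' : (n : ℝ) ≠ 0 := by positivity
      have : (L : ℝ) = (n : ℝ) * k := by field_simp at h2; linarith
      exact ⟨k, by exact_mod_cast this⟩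
    rw [geom_sum_eq hne]
    have : eC ((L : ℝ) / n) ^ n = 1 := by
      rw [← eC_nat_mul]
      have hn' : (n : ℝ) ≠ 0 := by positivity
      rw [mul_div_cancel₀ _ hn', eC_int]
    rw [this]
    simp

lemma units_to_range (n : ℕ) [NeZero n] (f : ℕ → ℂ) :
    ∑ a : (ZMod n)ˣ, f ((a : ZMod n).val)
      = ∑ i ∈ (range n).filter (fun i => Nat.Coprime i n), f i := by
  refine Finset.sum_bij' (fun a _ => (a : ZMod n).val)
    (fun i hi => ZMod.unitOfCoprime i (by simpa using (Finset.mem_filter.mp hi).2))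
    ?_ ?_ ?_ ?_ ?_
  · intro a _
    exact Finset.mem_filter.mpr ⟨Finset.mem_range.mpr (ZMod.val_lt _), ZMod.val_coe_unit_coprime a⟩
  · intro i hi
    simp
  · intro a _
    ext
    rw [ZMod.coe_unitOfCoprime]
    exact ZMod.natCast_rightInverse _
  · intro i hi
    have h : (ZMod.unitOfCoprime i (by simpa using (Finset.mem_filter.mp hi).2) : ZMod n).val = i := by
      rw [ZMod.coe_unitOfCoprime]
      exact ZMod.val_cast_of_lt (Finset.mem_range.mp (Finset.mem_filter.mp hi).1)
    exact h
  · intro a _; rfl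

lemma coprime_indicator (n : ℕ) (hn : n ≠ 0) (i : ℕ) :
    (if Nat.Coprime i n then (1 : ℂ) else 0)
      = ∑ e ∈ n.divisors.filter (· ∣ i), ((ArithmeticFunction.moebius e : ℤ) : ℂ) := by
  have hgcd : n.divisors.filter (· ∣ i) = (Nat.gcd i n).divisors := by
    ext e
    simp only [Nat.mem_divisors, Finset.mem_filter, Nat.dvd_gcd_iff]
    constructor
    · rintro ⟨⟨h1, _⟩, h2⟩
      exact ⟨⟨h2, h1⟩, Nat.gcd_ne_zero_right hn⟩
    · rintro ⟨⟨h2, h1⟩, _⟩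
      exact ⟨⟨h1, hn⟩, h2⟩
  rw [hgcd]
  have := congrArg (fun F => F (Nat.gcd i n)) ArithmeticFunction.moebius_mul_coe_zeta
  simp only [ArithmeticFunction.coe_mul_zeta_apply, ArithmeticFunction.one_apply] at this
  have h2 : ((∑ e ∈ (Nat.gcd i n).divisors, ArithmeticFunction.moebius e : ℤ) : ℂ)
      = if Nat.gcd i n = 1 then 1 else 0 := by
    rw [this]; split_ifs <;> simp
  rw [Int.cast_sum] at h2
  rw [h2]
  try simp [Nat.Coprime]

lemma filter_dvd_sum (n e : ℕ) (hn : 0 < n) (he : e ∣ n) (L : ℤ) :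
    ∑ i ∈ (range n).filter (fun i => e ∣ i), eC (((i : ℤ) * L : ℤ) / (n : ℝ))
      = ∑ j ∈ range (n / e), eC (((j : ℤ) * L : ℤ) / ((n / e : ℕ) : ℝ)) := by
  have he0 : 0 < e := Nat.pos_of_dvd_of_pos he hn
  have hne : n = e * (n / e) := (Nat.mul_div_cancel' he).symm
  refine Finset.sum_bij' (fun i _ => i / e) (fun j _ => e * j) ?_ ?_ ?_ ?_ ?_
  · intro i hi
    obtain ⟨h1, h2⟩ := Finset.mem_filter.mp hi
    rw [Finset.mem_range] at h1 ⊢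
    exact Nat.div_lt_div_of_lt_of_dvd he h1
  · intro j hj
    rw [Finset.mem_range] at hj
    refine Finset.mem_filter.mpr ⟨Finset.mem_range.mpr ?_, Dvd.intro j rfl⟩
    calc e * j < e * (n / e) := by exact (Nat.mul_lt_mul_left he0).mpr hj
    _ = n := hne.symm
  · intro i hi
    exact Nat.mul_div_cancel' (Finset.mem_filter.mp hi).2
  · intro j _
    exact Nat.mul_div_cancel_left j he0
  · intro i hi
    obtain ⟨h1, h2⟩ := Finset.mem_filter.mp hi
    obtain ⟨c, rfl⟩ := h2
    rw [Nat.mul_div_cancel_left c he0]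
    congr 1
    have hQ : ((n / e : ℕ) : ℝ) ≠ 0 := by
      have : 0 < n / e := Nat.div_pos (Nat.le_of_dvd hn he) he0
      positivity
    have hnr : (n : ℝ) = (e : ℝ) * ((n / e : ℕ) : ℝ) := by exact_mod_cast hne
    push_cast
    rw [hnr]
    have he0' : (e : ℝ) ≠ 0 := by positivity
    field_simp

lemma ramanujan (n : ℕ) [NeZero n] (L : ℤ) :
    ∑ a : (ZMod n)ˣ, eC (((((a : ZMod n).val : ℤ)) * L : ℤ) / (n : ℝ))
      = ∑ d ∈ n.divisors, (d : ℂ) * ((ArithmeticFunction.moebius (n / d) : ℤ) : ℂ)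
          * (if (d : ℤ) ∣ L then 1 else 0) := by
  have hn : n ≠ 0 := NeZero.ne n
  have hn0 : 0 < n := Nat.pos_of_ne_zero hn
  rw [units_to_range n (fun i => eC (((i : ℤ) * L : ℤ) / (n : ℝ)))]
  rw [Finset.sum_filter]
  have step1 : ∀ i ∈ range n,
      (if Nat.Coprime i n then eC (((i : ℤ) * L : ℤ) / (n : ℝ)) else 0)
        = ∑ e ∈ n.divisors, (if e ∣ i then ((ArithmeticFunction.moebius e : ℤ) : ℂ)
            * eC (((i : ℤ) * L : ℤ) / (n : ℝ)) else 0) := by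
    intro i _
    have : (if Nat.Coprime i n then eC (((i : ℤ) * L : ℤ) / (n : ℝ)) else 0)
        = (if Nat.Coprime i n then (1 : ℂ) else 0) * eC (((i : ℤ) * L : ℤ) / (n : ℝ)) := by
      split_ifs <;> simp
    rw [this, coprime_indicator n hn i, Finset.sum_filter, Finset.sum_mul]
    congr 1; ext e; split_ifs <;> simp
  rw [Finset.sum_congr rfl step1, Finset.sum_comm]
  rw [← Nat.sum_div_divisors n (fun d => (d : ℂ) * ((ArithmeticFunction.moebius (n / d) : ℤ) : ℂ)
      * (if (d : ℤ) ∣ L then 1 else 0))]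
  refine Finset.sum_congr rfl ?_
  intro e he
  obtain ⟨hed, _⟩ := Nat.mem_divisors.mp he
  have hnn : n / (n / e) = e := Nat.div_div_self hed hn
  rw [hnn]
  rw [← Finset.sum_filter, ← Finset.mul_sum, filter_dvd_sum n e hn0 hed L, full_sum (n / e)
    (Nat.div_pos (Nat.le_of_dvd hn0 hed) (Nat.pos_of_dvd_of_pos hed hn0)) L]
  split_ifs <;> ring

/-- Evaluation of the `a`-sum: opening the Kloosterman sum and detecting the congruence
via Ramanujan sums,
`Σ*_{a mod q} S(r ā, ±n₂; qr/n₁) e(ā m/q)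
  = Σ_{d|q} d μ(q/d) Σ*_{α mod qr/n₁, n₁α ≡ -m (d)} e(± ᾱ n₂/(qr/n₁))`. -/
theorem stmt6 (q r n₁ : ℕ) [NeZero q] (hr : 0 < r) (hn₁ : 0 < n₁)
    (hdvd : n₁ ∣ q * r) [NeZero (q * r / n₁)] (m n₂ s : ℤ) (hs : s = 1 ∨ s = -1) :
    ∑ a : (ZMod q)ˣ,
        kloosterman (r * (((a⁻¹ : (ZMod q)ˣ) : ZMod q).val : ℤ)) (s * n₂) (q * r / n₁) *
          eC ((((((a⁻¹ : (ZMod q)ˣ) : ZMod q).val : ℤ) * m : ℤ) : ℝ) / q)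
      = ∑ d ∈ q.divisors, (d : ℂ) * ((ArithmeticFunction.moebius (q / d) : ℤ) : ℂ) *
          ∑ α ∈ Finset.univ.filter
              (fun α : (ZMod (q * r / n₁))ˣ =>
                (d : ℤ) ∣ ((n₁ : ℤ) * (((α : ZMod (q * r / n₁))).val : ℤ) + m)),
            eC (((s * n₂ * (((α⁻¹ : (ZMod (q * r / n₁))ˣ) : ZMod (q * r / n₁)).val : ℤ) : ℤ) : ℝ)
              / ((q * r / n₁ : ℕ) : ℝ)) := by
  set Q : ℕ := q * r / n₁ with hQdef
  have hQR : (n₁ : ℕ) * Q = q * r := Nat.mul_div_cancel' hdvd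
  have hq0 : (0 : ℝ) < q := by exact_mod_cast Nat.pos_of_ne_zero (NeZero.ne q)
  have hQ0 : (0 : ℝ) < Q := by exact_mod_cast Nat.pos_of_ne_zero (NeZero.ne Q)
  have hQRr : (n₁ : ℝ) * (Q : ℝ) = (q : ℝ) * r := by exact_mod_cast hQR
  -- reindex a ↦ a⁻¹
  rw [Fintype.sum_bijective (Inv.inv : (ZMod q)ˣ → (ZMod q)ˣ) inv_involutive.bijective _
    (fun b => kloosterman (r * (((b : ZMod q) : ZMod q).val : ℤ)) (s * n₂) Q *
      eC (((((b : ZMod q).val : ℤ) * m : ℤ) : ℝ) / q)) (fun a => rfl)]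
  -- open the Kloosterman sum
  simp only [kloosterman, Finset.sum_mul]
  -- per-term manipulation
  have hterm : ∀ (b : (ZMod q)ˣ) (x : (ZMod Q)ˣ),
      eC ((((r : ℤ) * ((b : ZMod q).val : ℤ) * ((x : ZMod Q).val : ℤ)
            + (s * n₂) * (((x⁻¹ : (ZMod Q)ˣ) : ZMod Q).val : ℤ) : ℤ) : ℝ) / (Q : ℝ)) *
          eC (((((b : ZMod q).val : ℤ) * m : ℤ) : ℝ) / q)
        = eC (((((b : ZMod q).val : ℤ) * ((n₁ : ℤ) * ((x : ZMod Q).val : ℤ) + m) : ℤ) : ℝ) / q) *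
          eC (((s * n₂ * (((x⁻¹ : (ZMod Q)ˣ) : ZMod Q).val : ℤ) : ℤ) : ℝ) / (Q : ℝ)) := by
    intro b x
    rw [← eC_add, ← eC_add]
    congr 1
    have hq' : (q : ℝ) ≠ 0 := ne_of_gt hq0
    have hQ' : (Q : ℝ) ≠ 0 := ne_of_gt hQ0
    generalize ((b : ZMod q).val : ℤ) = vb
    generalize ((x : ZMod Q).val : ℤ) = vx
    generalize (((x⁻¹ : (ZMod Q)ˣ) : ZMod Q).val : ℤ) = vxi
    push_cast
    field_simp
    linear_combination (-1 * (vb : ℝ) * (vx : ℝ)) * hQRr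
  calc ∑ b : (ZMod q)ˣ, ∑ x : (ZMod Q)ˣ,
        eC ((((r : ℤ) * ((b : ZMod q).val : ℤ) * ((x : ZMod Q).val : ℤ)
            + (s * n₂) * (((x⁻¹ : (ZMod Q)ˣ) : ZMod Q).val : ℤ) : ℤ) : ℝ) / (Q : ℝ)) *
          eC (((((b : ZMod q).val : ℤ) * m : ℤ) : ℝ) / q)
      = ∑ x : (ZMod Q)ˣ, ∑ b : (ZMod q)ˣ,
          eC (((((b : ZMod q).val : ℤ) * ((n₁ : ℤ) * ((x : ZMod Q).val : ℤ) + m) : ℤ) : ℝ) / q) *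
          eC (((s * n₂ * (((x⁻¹ : (ZMod Q)ˣ) : ZMod Q).val : ℤ) : ℤ) : ℝ) / (Q : ℝ)) := by
        rw [Finset.sum_comm]
        exact Finset.sum_congr rfl fun x _ => Finset.sum_congr rfl fun b _ => hterm b x
    _ = ∑ x : (ZMod Q)ˣ, (∑ d ∈ q.divisors, (d : ℂ) * ((ArithmeticFunction.moebius (q / d) : ℤ) : ℂ)
          * (if (d : ℤ) ∣ ((n₁ : ℤ) * ((x : ZMod Q).val : ℤ) + m) then 1 else 0)) *
          eC (((s * n₂ * (((x⁻¹ : (ZMod Q)ˣ) : ZMod Q).val : ℤ) : ℤ) : ℝ) / (Q : ℝ)) := by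
        refine Finset.sum_congr rfl fun x _ => ?_
        rw [← Finset.sum_mul, ramanujan q ((n₁ : ℤ) * ((x : ZMod Q).val : ℤ) + m)]
    _ = ∑ d ∈ q.divisors, (d : ℂ) * ((ArithmeticFunction.moebius (q / d) : ℤ) : ℂ) *
          ∑ α ∈ Finset.univ.filter
              (fun α : (ZMod Q)ˣ =>
                (d : ℤ) ∣ ((n₁ : ℤ) * (((α : ZMod Q)).val : ℤ) + m)),
            eC (((s * n₂ * (((α⁻¹ : (ZMod Q)ˣ) : ZMod Q).val : ℤ) : ℤ) : ℝ) / (Q : ℝ)) := by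
        simp only [Finset.sum_mul, Finset.mul_sum, Finset.sum_filter]
        rw [Finset.sum_comm]
        refine Finset.sum_congr rfl fun x _ => Finset.sum_congr rfl fun d _ => ?_
        split_ifs <;> ring
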